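/- Let ρ > 0, ν ∈ ℝ with cos(πν) ≠ 0, and let r' ∈ EuclideanSpace ℝ (Fin 3) be nonzero. Set a = −(ρ²/‖r'‖²)·r' and I_a(r) = ((ρ² + ‖a‖²)/‖r − a‖²)·(r − a) + a. Then for every r with r ≠ a and r ≠ r', G_ν(r, r') = (ρ²/‖r'‖) · ‖r − a‖^{−1} · g₀(‖I_a(r)‖), where g₀(s) = −(√(s² + ρ²)/(4π cos(πν) s ρ)) · sin((ν + 1/2) · arccos((s² − ρ²)/(s² + ρ²))) is the Green's function for a source at the origin. -/

import Mathlib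

/-!
Inversion in the sphere centred at the antipode `a` of `r'` and of radius `√(ρ² + ‖a‖²)` sends
`r'` to the origin, so the distance formula for inversions gives
`‖I_a r‖ = ρ² ‖r - r'‖ / (‖r'‖ ‖r - a‖)`. Moreover `(‖r'‖ ‖r - a‖)²` is the radicand
`‖r‖² ‖r'‖² + 2ρ² ⟪r, r'⟫ + ρ⁴` of `G_ν`, and adding `ρ² ‖r - r'‖²` to it gives
`(‖r‖² + ρ²)(‖r'‖² + ρ²)`; with these, the prefactor and the `arccos` argument of
`g₀ (‖I_a r‖)` turn into those of `G_ν`.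
-/

noncomputable def fisheyeGreen (ρ ν : ℝ) (r r' : EuclideanSpace ℝ (Fin 3)) : ℝ :=
  -(1 / (4 * Real.pi * Real.cos (Real.pi * ν)))
    * (Real.sqrt ((‖r‖ ^ 2 + ρ ^ 2) * (‖r'‖ ^ 2 + ρ ^ 2))
        / (‖r - r'‖
            * Real.sqrt (‖r‖ ^ 2 * ‖r'‖ ^ 2 + 2 * ρ ^ 2 * (inner ℝ r r' : ℝ) + ρ ^ 4)))
    * Real.sin ((ν + 1 / 2)
        * Real.arccos (-1 + 2 * ρ ^ 2 * ‖r - r'‖ ^ 2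
            / ((‖r‖ ^ 2 + ρ ^ 2) * (‖r'‖ ^ 2 + ρ ^ 2))))

open Real EuclideanGeometry RealInnerProductSpace

noncomputable def centralGreen (ρ ν s : ℝ) : ℝ :=
  -(√(s ^ 2 + ρ ^ 2) / (4 * π * cos (π * ν) * s * ρ))
    * sin ((ν + 1 / 2) * arccos ((s ^ 2 - ρ ^ 2) / (s ^ 2 + ρ ^ 2)))

theorem div_mul_centralGreen_div {ρ d X : ℝ} (ν : ℝ) (hρ : 0 < ρ) (hd : 0 < d) (hX : 0 < X) :
    ρ ^ 2 / X * centralGreen ρ ν (ρ ^ 2 * d / X)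
      = -(1 / (4 * π * cos (π * ν))) * (√(ρ ^ 2 * d ^ 2 + X ^ 2) / (d * X))
        * sin ((ν + 1 / 2) * arccos (-1 + 2 * ρ ^ 2 * d ^ 2 / (ρ ^ 2 * d ^ 2 + X ^ 2))) := by
  set s := ρ ^ 2 * d / X
  have hs_sq : s ^ 2 + ρ ^ 2 = ρ ^ 2 * (ρ ^ 2 * d ^ 2 + X ^ 2) / X ^ 2 := by
    simp only [s]; field_simp
  have h_sqrt : ρ ^ 2 / X * (√(s ^ 2 + ρ ^ 2) / (s * ρ)) = √(ρ ^ 2 * d ^ 2 + X ^ 2) / (d * X) := by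
    rw [hs_sq, sqrt_div' _ (sq_nonneg X), sqrt_mul' _ (by positivity), sqrt_sq hρ.le,
      sqrt_sq hX.le]
    simp only [s]; field_simp
  have h_cos : (s ^ 2 - ρ ^ 2) / (s ^ 2 + ρ ^ 2)
      = -1 + 2 * ρ ^ 2 * d ^ 2 / (ρ ^ 2 * d ^ 2 + X ^ 2) := by
    simp only [s]; field_simp; ring
  rw [centralGreen, ← h_sqrt, h_cos]
  ring

variable {E : Type*} [NormedAddCommGroup E] [InnerProductSpace ℝ E]

theorem inversion_sqrt_apply {R₂ : ℝ} (hR₂ : 0 ≤ R₂) (c x : E) :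
    inversion c √R₂ x = (R₂ / ‖x - c‖ ^ 2) • (x - c) + c := by
  rw [inversion, div_pow, sq_sqrt hR₂, dist_eq_norm, vsub_eq_sub, vadd_eq_add]

/-- The stereographic image of the point antipodal to `r'` on the fish-eye sphere of radius `ρ`. -/
noncomputable def fisheyeAntipode (ρ : ℝ) (r' : E) : E := -(ρ ^ 2 / ‖r'‖ ^ 2) • r'

theorem self_sub_fisheyeAntipode (ρ : ℝ) (r' : E) :
    r' - fisheyeAntipode ρ r' = (1 + ρ ^ 2 / ‖r'‖ ^ 2) • r' := by
  rw [fisheyeAntipode, add_smul, one_smul, neg_smul, sub_neg_eq_add]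

theorem norm_self_sub_fisheyeAntipode {r' : E} (hr' : r' ≠ 0) (ρ : ℝ) :
    ‖r' - fisheyeAntipode ρ r'‖ = (‖r'‖ ^ 2 + ρ ^ 2) / ‖r'‖ := by
  have := norm_pos_iff.2 hr'
  rw [self_sub_fisheyeAntipode, norm_smul, Real.norm_of_nonneg (by positivity)]
  field_simp

theorem sq_add_norm_fisheyeAntipode_sq {r' : E} (hr' : r' ≠ 0) (ρ : ℝ) :
    ρ ^ 2 + ‖fisheyeAntipode ρ r'‖ ^ 2 = ρ ^ 2 * (‖r'‖ ^ 2 + ρ ^ 2) / ‖r'‖ ^ 2 := by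
  have := norm_pos_iff.2 hr'
  rw [fisheyeAntipode, norm_smul, mul_pow, norm_neg, Real.norm_of_nonneg (by positivity)]
  field_simp

theorem inversion_fisheyeAntipode_self {r' : E} (hr' : r' ≠ 0) (ρ : ℝ) :
    inversion (fisheyeAntipode ρ r') √(ρ ^ 2 + ‖fisheyeAntipode ρ r'‖ ^ 2) r' = 0 := by
  have := norm_pos_iff.2 hr'
  rw [inversion_sqrt_apply (by positivity), norm_self_sub_fisheyeAntipode hr',
    sq_add_norm_fisheyeAntipode_sq hr', self_sub_fisheyeAntipode, smul_smul, fisheyeAntipode,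
    ← add_smul]
  convert zero_smul ℝ r'
  field_simp
  ring

theorem norm_inversion_fisheyeAntipode {r r' : E} (hr' : r' ≠ 0) (ρ : ℝ)
    (hr : r ≠ fisheyeAntipode ρ r') :
    ‖inversion (fisheyeAntipode ρ r') √(ρ ^ 2 + ‖fisheyeAntipode ρ r'‖ ^ 2) r‖
      = ρ ^ 2 * ‖r - r'‖ / (‖r'‖ * ‖r - fisheyeAntipode ρ r'‖) := by
  have := norm_pos_iff.2 hr'
  have hr'a : r' ≠ fisheyeAntipode ρ r' := by
    rw [← sub_ne_zero, ← norm_pos_iff, norm_self_sub_fisheyeAntipode hr']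
    positivity
  -- `‖I r‖ = dist (I r) (I r')` because `I r' = 0`.
  rw [← dist_zero_right, ← inversion_fisheyeAntipode_self hr' ρ,
    dist_inversion_inversion hr hr'a, sq_sqrt (by positivity), dist_eq_norm, dist_eq_norm,
    dist_eq_norm, norm_self_sub_fisheyeAntipode hr', sq_add_norm_fisheyeAntipode_sq hr']
  field_simp

theorem norm_mul_norm_sub_fisheyeAntipode_sq {r' : E} (hr' : r' ≠ 0) (ρ : ℝ) (r : E) :
    (‖r'‖ * ‖r - fisheyeAntipode ρ r'‖) ^ 2
      = ‖r‖ ^ 2 * ‖r'‖ ^ 2 + 2 * ρ ^ 2 * ⟪r, r'⟫ + ρ ^ 4 := by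
  have := norm_pos_iff.2 hr'
  rw [mul_pow, norm_sub_sq_real, fisheyeAntipode, inner_smul_right, norm_smul, mul_pow, norm_neg,
    Real.norm_of_nonneg (by positivity)]
  field_simp
  ring

theorem fisheye_sq_norm_identity (ρ : ℝ) (r r' : E) :
    ρ ^ 2 * ‖r - r'‖ ^ 2 + (‖r‖ ^ 2 * ‖r'‖ ^ 2 + 2 * ρ ^ 2 * ⟪r, r'⟫ + ρ ^ 4)
      = (‖r‖ ^ 2 + ρ ^ 2) * (‖r'‖ ^ 2 + ρ ^ 2) := by
  rw [norm_sub_sq_real]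
  ring

theorem fisheye_green_from_inversion_of_central_green_general
    (ρ ν : ℝ) (hρ : 0 < ρ)
    (r' : EuclideanSpace ℝ (Fin 3)) (hr' : r' ≠ 0)
    (a : EuclideanSpace ℝ (Fin 3)) (ha : a = -(ρ ^ 2 / ‖r'‖ ^ 2) • r')
    (Ia : EuclideanSpace ℝ (Fin 3) → EuclideanSpace ℝ (Fin 3))
    (hIa : Ia = fun r => ((ρ ^ 2 + ‖a‖ ^ 2) / ‖r - a‖ ^ 2) • (r - a) + a)
    (g₀ : ℝ → ℝ)
    (hg₀ : g₀ = fun s =>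
      -(Real.sqrt (s ^ 2 + ρ ^ 2) / (4 * Real.pi * Real.cos (Real.pi * ν) * s * ρ))
        * Real.sin ((ν + 1 / 2) * Real.arccos ((s ^ 2 - ρ ^ 2) / (s ^ 2 + ρ ^ 2)))) :
    ∀ r : EuclideanSpace ℝ (Fin 3), r ≠ a → r ≠ r' →
      fisheyeGreen ρ ν r r' = (ρ ^ 2 / ‖r'‖) * ‖r - a‖⁻¹ * g₀ ‖Ia r‖ := by
  intro r hra hrr'
  obtain rfl : Ia = inversion a √(ρ ^ 2 + ‖a‖ ^ 2) :=
    hIa.trans (funext (inversion_sqrt_apply (by positivity) a)).symm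
  obtain rfl : a = fisheyeAntipode ρ r' := ha
  obtain rfl : g₀ = centralGreen ρ ν := hg₀
  have hX : 0 < ‖r'‖ * ‖r - fisheyeAntipode ρ r'‖ := by
    have := sub_ne_zero.2 hra
    positivity
  have hd : 0 < ‖r - r'‖ := norm_pos_iff.2 (sub_ne_zero.2 hrr')
  rw [← div_eq_mul_inv, div_div, norm_inversion_fisheyeAntipode hr' ρ hra,
    div_mul_centralGreen_div ν hρ hd hX, fisheyeGreen, ← fisheye_sq_norm_identity,
    ← norm_mul_norm_sub_fisheyeAntipode_sq hr', sqrt_sq hX.le]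

theorem fisheye_green_from_inversion_of_central_green
    (ρ ν : ℝ) (hρ : 0 < ρ) (hν : Real.cos (Real.pi * ν) ≠ 0)
    (r' : EuclideanSpace ℝ (Fin 3)) (hr' : r' ≠ 0)
    (a : EuclideanSpace ℝ (Fin 3)) (ha : a = -(ρ ^ 2 / ‖r'‖ ^ 2) • r')
    (Ia : EuclideanSpace ℝ (Fin 3) → EuclideanSpace ℝ (Fin 3))
    (hIa : Ia = fun r => ((ρ ^ 2 + ‖a‖ ^ 2) / ‖r - a‖ ^ 2) • (r - a) + a)
    (g₀ : ℝ → ℝ)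
    (hg₀ : g₀ = fun s =>
      -(Real.sqrt (s ^ 2 + ρ ^ 2) / (4 * Real.pi * Real.cos (Real.pi * ν) * s * ρ))
        * Real.sin ((ν + 1 / 2) * Real.arccos ((s ^ 2 - ρ ^ 2) / (s ^ 2 + ρ ^ 2)))) :
    ∀ r : EuclideanSpace ℝ (Fin 3), r ≠ a → r ≠ r' →
      fisheyeGreen ρ ν r r' = (ρ ^ 2 / ‖r'‖) * ‖r - a‖⁻¹ * g₀ ‖Ia r‖ :=
  fisheye_green_from_inversion_of_central_green_general ρ ν hρ r' hr' a ha Ia hIa g₀ hg₀
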